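/- arXiv:1805.01016 — 3 statements merged into one kernel-verified Lean document; each statement's English description precedes it below -/
import Mathlib

section
/- Any two norms on a finite dimensional vector space over a field complete with respect to a (possibly trivial) absolute value are equivalent: there exists C > 0 such that C⁻¹‖·‖ ≤ ‖·‖' ≤ C‖·‖. -/
/-- A (vector space) norm on `V` over the valued field `K`: nonnegative, absolutely
homogeneous with respect to the absolute value of `K`, subadditive, and definite. -/
def IsVNorm (K : Type*) [NormedField K] {V : Type*} [AddCommGroup V] [Module K V]
    (f : V → ℝ) : Prop :=
  (∀ v, 0 ≤ f v) ∧ (∀ (a : K) (v : V), f (a • v) = ‖a‖ * f v) ∧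
    (∀ v w, f (v + w) ≤ f v + f w) ∧ ∀ v, f v = 0 → v = 0

section Aux
variable {K V : Type*} [NormedField K] [AddCommGroup V] [Module K V]

lemma IsVNorm.zero {f : V → ℝ} (hf : IsVNorm K f) : f 0 = 0 := by
  have := hf.2.1 (0 : K) 0
  simpa using this

lemma IsVNorm.neg {f : V → ℝ} (hf : IsVNorm K f) (v : V) : f (-v) = f v := by
  have := hf.2.1 (-1 : K) v
  simpa using this

lemma IsVNorm.pos {f : V → ℝ} (hf : IsVNorm K f) {v : V} (hv : v ≠ 0) : 0 < f v :=
  lt_of_le_of_ne (hf.1 v) fun h => hv (hf.2.2.2 v h.symm)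

/-- package as AddGroupNorm -/
def IsVNorm.addGroupNorm {f : V → ℝ} (hf : IsVNorm K f) : AddGroupNorm V where
  toFun := f
  map_zero' := hf.zero
  add_le' := hf.2.2.1
  neg' := hf.neg
  eq_zero_of_map_eq_zero' := hf.2.2.2

lemma IsVNorm.sum_le {f : V → ℝ} (hf : IsVNorm K f) {ι : Type*} (s : Finset ι) (x : ι → V) :
    f (∑ i ∈ s, x i) ≤ ∑ i ∈ s, f (x i) := by
  classical
  induction s using Finset.induction with
  | empty => simp [hf.zero]
  | insert _ _ hi ih =>
    rw [Finset.sum_insert hi, Finset.sum_insert hi]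
    exact le_trans (hf.2.2.1 _ _) (by linarith)

end Aux

section Nontrivial

/-- In the nontrivially-valued case, any `IsVNorm` is dominated by the ambient norm. -/
theorem vnorm_le_const_mul_norm {K E : Type*} [NontriviallyNormedField K] [CompleteSpace K]
    [NormedAddCommGroup E] [NormedSpace K E] [FiniteDimensional K E]
    (g : E → ℝ) (hg : IsVNorm K g) : ∃ C : ℝ, 0 < C ∧ ∀ v, g v ≤ C * ‖v‖ := by
  classical
  set b := Module.finBasis K E with hb
  have hcont : ∀ i, ∃ Ci : ℝ, 0 < Ci ∧ ∀ v, ‖b.coord i v‖ ≤ Ci * ‖v‖ := fun i =>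
    (LinearMap.toContinuousLinearMap (b.coord i)).bound
  choose Ci hCipos hCi using hcont
  refine ⟨(∑ i, Ci i * g (b i)) + 1, ?_, ?_⟩
  · have : 0 ≤ ∑ i, Ci i * g (b i) :=
      Finset.sum_nonneg fun i _ => mul_nonneg (hCipos i).le (hg.1 _)
    linarith
  · intro v
    have hv : v = ∑ i, b.repr v i • b i := (b.sum_repr v).symm
    calc g v = g (∑ i, b.repr v i • b i) := by rw [← hv]
      _ ≤ ∑ i, g (b.repr v i • b i) := hg.sum_le _ _
      _ = ∑ i, ‖b.repr v i‖ * g (b i) := by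
          refine Finset.sum_congr rfl fun i _ => hg.2.1 _ _
      _ ≤ ∑ i, (Ci i * ‖v‖) * g (b i) := by
          refine Finset.sum_le_sum fun i _ => ?_
          exact mul_le_mul_of_nonneg_right (hCi i v) (hg.1 _)
      _ = (∑ i, Ci i * g (b i)) * ‖v‖ := by
          rw [Finset.sum_mul]; refine Finset.sum_congr rfl fun i _ => by ring
      _ ≤ ((∑ i, Ci i * g (b i)) + 1) * ‖v‖ := by
          have := norm_nonneg v; nlinarith

end Nontrivial

section Trivial

variable {K V : Type*} [NormedField K] [AddCommGroup V] [Module K V]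

/-- One induction step for the lower bound in the trivially-valued case. -/
lemma trivial_lower_step (htriv : ∀ a : K, a ≠ 0 → ‖a‖ = 1)
    {f : V → ℝ} (hf : IsVNorm K f) (W : Submodule K V) {v : V} (hv : v ∉ W)
    {c' : ℝ} (hc' : 0 < c') (hW : ∀ w ∈ W, w ≠ 0 → c' ≤ f w) :
    ∃ c : ℝ, 0 < c ∧ c ≤ c' ∧
      ∀ x ∈ Submodule.span K (insert v (W : Set V)), x ≠ 0 → c ≤ f x := by
  classical
  -- two close approximants coincide
  have key : ∀ w₁ ∈ W, ∀ w₂ ∈ W, f (v + w₁) < c' / 2 → f (v + w₂) < c' / 2 → w₁ = w₂ := by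
    intro w₁ h₁ w₂ h₂ hf₁ hf₂
    by_contra hne
    have hmem : w₁ - w₂ ∈ W := W.sub_mem h₁ h₂
    have hz : w₁ - w₂ ≠ 0 := sub_ne_zero.mpr hne
    have : f (w₁ - w₂) ≤ f (v + w₁) + f (v + w₂) := by
      have h : w₁ - w₂ = (v + w₁) + -(v + w₂) := by abel
      calc f (w₁ - w₂) = f ((v + w₁) + -(v + w₂)) := by rw [h]
        _ ≤ f (v + w₁) + f (-(v + w₂)) := hf.2.2.1 _ _
        _ = f (v + w₁) + f (v + w₂) := by rw [hf.neg]
    have := hW _ hmem hz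
    linarith
  -- reduce any element with nonzero `v`-coefficient
  have reduce : ∀ (a : K), a ≠ 0 → ∀ z ∈ W, f (a • v + z) = f (v + a⁻¹ • z) := by
    intro a ha z hz
    have : a • v + z = a • (v + a⁻¹ • z) := by
      rw [smul_add, smul_smul, mul_inv_cancel₀ ha, one_smul]
    rw [this, hf.2.1, htriv a ha, one_mul]
  by_cases hex : ∃ w ∈ W, f (v + w) < c' / 2
  · obtain ⟨w₀, hw₀, hfw₀⟩ := hex
    have hvz : v + w₀ ≠ 0 := by
      intro h
      have hv' : v = -w₀ := eq_neg_of_add_eq_zero_left h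
      exact hv (hv' ▸ W.neg_mem hw₀)
    refine ⟨min (c' / 2) (f (v + w₀)), lt_min (by linarith) (hf.pos hvz),
      (min_le_left _ _).trans (by linarith), ?_⟩
    intro x hx hx0
    rw [Submodule.mem_span_insert] at hx
    obtain ⟨a, z, hzW, rfl⟩ := hx
    have hzW' : z ∈ W := by rwa [Submodule.span_eq] at hzW
    by_cases ha : a = 0
    · subst ha
      simp only [zero_smul, zero_add] at hx0 ⊢
      exact le_trans (min_le_left _ _) (le_trans (by linarith) (hW _ hzW' hx0))
    · rw [reduce a ha z hzW']
      by_cases hsmall : f (v + a⁻¹ • z) < c' / 2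
      · have := key _ (W.smul_mem a⁻¹ hzW') _ hw₀ hsmall hfw₀
        rw [this]
        exact min_le_right _ _
      · exact le_trans (min_le_left _ _) (not_lt.mp hsmall)
  · push_neg at hex
    refine ⟨c' / 2, by linarith, by linarith, ?_⟩
    intro x hx hx0
    rw [Submodule.mem_span_insert] at hx
    obtain ⟨a, z, hzW, rfl⟩ := hx
    have hzW' : z ∈ W := by rwa [Submodule.span_eq] at hzW
    by_cases ha : a = 0
    · subst ha
      simp only [zero_smul, zero_add] at hx0 ⊢
      linarith [hW _ hzW' hx0]
    · rw [reduce a ha z hzW']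
      exact hex _ (W.smul_mem a⁻¹ hzW')

/-- In the trivially-valued case any `IsVNorm` is bounded above and below on nonzero vectors. -/
theorem vnorm_bounds_trivial [FiniteDimensional K V] (htriv : ∀ a : K, a ≠ 0 → ‖a‖ = 1)
    (f : V → ℝ) (hf : IsVNorm K f) :
    ∃ c C : ℝ, 0 < c ∧ 0 < C ∧ ∀ v : V, v ≠ 0 → c ≤ f v ∧ f v ≤ C := by
  classical
  set n := Module.finrank K V with hn
  set b := Module.finBasis K V with hb
  -- upper bound
  have hnorm_le : ∀ a : K, ‖a‖ ≤ 1 := by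
    intro a
    by_cases ha : a = 0
    · simp [ha]
    · rw [htriv a ha]
  have upper : ∀ v : V, f v ≤ ∑ i, f (b i) := by
    intro v
    calc f v = f (∑ i, b.repr v i • b i) := by rw [b.sum_repr v]
      _ ≤ ∑ i, f (b.repr v i • b i) := hf.sum_le _ _
      _ ≤ ∑ i, f (b i) := by
        refine Finset.sum_le_sum fun i _ => ?_
        rw [hf.2.1]
        calc ‖b.repr v i‖ * f (b i) ≤ 1 * f (b i) :=
              mul_le_mul_of_nonneg_right (hnorm_le _) (hf.1 _)
          _ = f (b i) := one_mul _
  -- lower bound by induction on the basis prefix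
  have lower : ∀ i : ℕ, i ≤ n → ∃ c : ℝ, 0 < c ∧
      ∀ x ∈ Submodule.span K (b '' {j : Fin n | (j : ℕ) < i}), x ≠ 0 → c ≤ f x := by
    intro i
    induction i with
    | zero =>
      intro _
      refine ⟨1, one_pos, ?_⟩
      intro x hx hx0
      have : {j : Fin n | (j : ℕ) < 0} = ∅ := by ext j; simp
      rw [this, Set.image_empty, Submodule.span_empty, Submodule.mem_bot] at hx
      exact absurd hx hx0
    | succ i ih =>
      intro hi
      obtain ⟨c', hc', hW⟩ := ih (Nat.le_of_succ_le hi)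
      set k : Fin n := ⟨i, hi⟩ with hk
      have hset : {j : Fin n | (j : ℕ) < i + 1} = insert k {j : Fin n | (j : ℕ) < i} := by
        ext j
        simp only [Set.mem_setOf_eq, Set.mem_insert_iff, Nat.lt_succ_iff_lt_or_eq]
        constructor
        · rintro (h | h)
          · exact Or.inr h
          · exact Or.inl (Fin.ext h)
        · rintro (h | h)
          · exact Or.inr (by rw [h])
          · exact Or.inl h
      set W : Submodule K V := Submodule.span K (b '' {j : Fin n | (j : ℕ) < i}) with hWdef
      have hvW : b k ∉ W := by
        have : ¬ (k ∈ {j : Fin n | (j : ℕ) < i}) := by simp [hk]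
        exact b.linearIndependent.notMem_span_image this
      obtain ⟨c, hc, _, hcx⟩ := trivial_lower_step htriv hf W hvW hc' hW
      refine ⟨c, hc, ?_⟩
      intro x hx hx0
      refine hcx x ?_ hx0
      rw [hset, Set.image_insert_eq, Submodule.span_insert] at hx
      rwa [Submodule.span_insert, Submodule.span_eq]
  obtain ⟨c, hc, hlow⟩ := lower n le_rfl
  refine ⟨c, (∑ i, f (b i)) + 1, hc, ?_, ?_⟩
  · have : (0:ℝ) ≤ ∑ i, f (b i) := Finset.sum_nonneg fun i _ => hf.1 _
    linarith
  · intro v hv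
    constructor
    · refine hlow v ?_ hv
      have : {j : Fin n | (j : ℕ) < n} = Set.univ := by
        ext j; simp [Fin.isLt]
      rw [this, Set.image_univ, b.span_eq]
      exact Submodule.mem_top
    · linarith [upper v]

end Trivial

/-- Any two norms on a finite-dimensional vector space over a complete valued field are
equivalent: there is `C > 0` with `C⁻¹‖·‖ ≤ ‖·‖' ≤ C‖·‖`. -/
theorem norms_equivalent {K V : Type*} [NormedField K] [CompleteSpace K]
    [AddCommGroup V] [Module K V] [FiniteDimensional K V]
    (f g : V → ℝ) (hf : IsVNorm K f) (hg : IsVNorm K g) :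
    ∃ C : ℝ, 0 < C ∧ ∀ v : V, C⁻¹ * f v ≤ g v ∧ g v ≤ C * f v := by
  classical
  by_cases htriv : ∀ a : K, a ≠ 0 → ‖a‖ = 1
  · obtain ⟨cf, Cf, hcf, hCf, hbf⟩ := vnorm_bounds_trivial htriv f hf
    obtain ⟨cg, Cg, hcg, hCg, hbg⟩ := vnorm_bounds_trivial htriv g hg
    have hCpos : 0 < max (Cg / cf) (Cf / cg) + 1 := by
      have h1 : 0 < Cg / cf := div_pos hCg hcf
      have := le_max_left (Cg / cf) (Cf / cg)
      linarith
    refine ⟨max (Cg / cf) (Cf / cg) + 1, hCpos, ?_⟩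
    · intro v
      by_cases hv : v = 0
      · subst hv
        rw [hf.zero, hg.zero]
        simp
      · obtain ⟨hf1, hf2⟩ := hbf v hv
        obtain ⟨hg1, hg2⟩ := hbg v hv
        constructor
        · rw [inv_mul_le_iff₀ hCpos]
          have h1 : Cf / cg ≤ max (Cg / cf) (Cf / cg) + 1 := by
            have := le_max_right (Cg / cf) (Cf / cg); linarith
          have h2 : 0 < Cf / cg := div_pos hCf hcg
          calc f v ≤ Cf := hf2
            _ = (Cf / cg) * cg := (div_mul_cancel₀ Cf (ne_of_gt hcg)).symm
            _ ≤ (max (Cg / cf) (Cf / cg) + 1) * g v := by nlinarith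
        · have h1 : Cg / cf ≤ max (Cg / cf) (Cf / cg) + 1 := by
            have := le_max_left (Cg / cf) (Cf / cg); linarith
          have h2 : 0 < Cg / cf := div_pos hCg hcf
          calc g v ≤ Cg := hg2
            _ = (Cg / cf) * cf := (div_mul_cancel₀ Cg (ne_of_gt hcf)).symm
            _ ≤ (max (Cg / cf) (Cf / cg) + 1) * f v := by nlinarith
  · -- nontrivially valued case
    push_neg at htriv
    obtain ⟨a, ha0, ha1⟩ := htriv
    have hnt : ∃ x : K, 1 < ‖x‖ := by
      rcases lt_or_gt_of_ne ha1 with h | h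
      · refine ⟨a⁻¹, ?_⟩
        rw [norm_inv]
        exact (one_lt_inv₀ (norm_pos_iff.mpr ha0)).mpr h
      · exact ⟨a, h⟩
    letI : NontriviallyNormedField K := { ‹NormedField K› with non_trivial := hnt }
    have h1 : ∃ C : ℝ, 0 < C ∧ ∀ v, g v ≤ C * f v := by
      letI : NormedAddCommGroup V := hf.addGroupNorm.toNormedAddCommGroup
      letI : NormedSpace K V := by
        refine { ‹Module K V› with norm_smul_le := fun a v => ?_ }
        change f (a • v) ≤ ‖a‖ * f v
        exact le_of_eq (hf.2.1 a v)
      obtain ⟨C, hC, h⟩ := vnorm_le_const_mul_norm g hg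
      exact ⟨C, hC, fun v => h v⟩
    have h2 : ∃ C : ℝ, 0 < C ∧ ∀ v, f v ≤ C * g v := by
      letI : NormedAddCommGroup V := hg.addGroupNorm.toNormedAddCommGroup
      letI : NormedSpace K V := by
        refine { ‹Module K V› with norm_smul_le := fun a v => ?_ }
        change g (a • v) ≤ ‖a‖ * g v
        exact le_of_eq (hg.2.1 a v)
      obtain ⟨C, hC, h⟩ := vnorm_le_const_mul_norm f hf
      exact ⟨C, hC, fun v => h v⟩
    obtain ⟨C₁, hC₁, hb₁⟩ := h1
    obtain ⟨C₂, hC₂, hb₂⟩ := h2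
    refine ⟨max C₁ C₂, lt_of_lt_of_le hC₁ (le_max_left _ _), fun v => ⟨?_, ?_⟩⟩
    · rw [inv_mul_le_iff₀ (lt_of_lt_of_le hC₁ (le_max_left _ _))]
      calc f v ≤ C₂ * g v := hb₂ v
        _ ≤ max C₁ C₂ * g v :=
            mul_le_mul_of_nonneg_right (le_max_right _ _) (hg.1 v)
    · calc g v ≤ C₁ * f v := hb₁ v
        _ ≤ max C₁ C₂ * f v :=
            mul_le_mul_of_nonneg_right (le_max_left _ _) (hf.1 v)
end

section
/- Let ‖·‖ be a norm on V, ω a nonzero element of det V∨ viewed as an alternating multilinear form, and ‖ω‖_op := sup |ω(v₁,…,v_N)|/(‖v₁‖⋯‖v_N‖). Then for any basis (e_i) of V and all scalars α_i, max_i ‖α_i e_i‖ ≤ (‖ω‖_op ‖e₁‖⋯‖e_N‖ / |ω(e₁,…,e_N)|) · ‖∑_i α_i e_i‖. -/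
/-- The operator norm of a top-degree alternating form with respect to a norm `f`. -/
noncomputable def altOpNorm {K V : Type*} [NormedField K] [AddCommGroup V] [Module K V]
    {N : ℕ} (f : V → ℝ) (ω : V [⋀^Fin N]→ₗ[K] K) : ℝ :=
  ⨆ v : Fin N → V, ‖ω v‖ / ∏ i, f (v i)

section Aux

variable {K V : Type*} [NormedField K] [AddCommGroup V] [Module K V]

/-- In the trivially-valued case, a norm on a space with basis indexed by `Fin N`
is bounded below on each span of a subfamily. -/
lemma span_bound {N : ℕ} (f : V → ℝ) (hf : IsVNorm K f)
    (hone : ∀ x : K, x ≠ 0 → ‖x‖ = 1) (B : Module.Basis (Fin N) K V) (s : Finset (Fin N)) :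
    ∃ c : ℝ, 0 < c ∧ ∀ w ∈ Submodule.span K (B '' ↑s), w ≠ 0 → c ≤ f w := by
  classical
  induction s using Finset.induction_on with
  | empty =>
      refine ⟨1, one_pos, fun w hw hw0 => absurd ?_ hw0⟩
      simpa using hw
  | @insert j s hj ih =>
      obtain ⟨c, hc, hcs⟩ := ih
      have himg : (B '' ↑(insert j s) : Set V) = insert (B j) (B '' ↑s) := by
        rw [Finset.coe_insert, Set.image_insert_eq]
      have hBj : (B j : V) ∉ Submodule.span K (B '' ↑s) :=
        B.linearIndependent.notMem_span_image (by simpa using hj)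
      have main : ∀ c' : ℝ, 0 < c' →
          (∀ h ∈ Submodule.span K (B '' (s : Set (Fin N))), c' ≤ f (B j + h)) →
          ∃ c'' : ℝ, 0 < c'' ∧
            ∀ w ∈ Submodule.span K (B '' ↑(insert j s)), w ≠ 0 → c'' ≤ f w := by
        intro c' hc' hlow
        refine ⟨min c c', lt_min hc hc', fun w hw hw0 => ?_⟩
        rw [himg, Submodule.mem_span_insert] at hw
        obtain ⟨a, z, hz, rfl⟩ := hw
        by_cases ha : a = 0
        · subst ha
          rw [zero_smul, zero_add] at hw0 ⊢
          exact le_trans (min_le_left _ _) (hcs z hz hw0)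
        · have hfw : f (a • (B j : V) + z) = f (B j + a⁻¹ • z) := by
            have h1 : a • ((B j : V) + a⁻¹ • z) = a • (B j : V) + z := by
              rw [smul_add, smul_inv_smul₀ ha]
            rw [← h1, hf.2.1, hone a ha, one_mul]
          rw [hfw]
          exact le_trans (min_le_right _ _)
            (hlow _ (Submodule.smul_mem _ _ hz))
      by_cases hex : ∃ h ∈ Submodule.span K (B '' (s : Set (Fin N))), f (B j + h) < c / 2
      · obtain ⟨h₀, hh₀, hs₀⟩ := hex
        have hne : (B j : V) + h₀ ≠ 0 := by
          intro h
          exact hBj (by rw [eq_neg_of_add_eq_zero_left h]; exact Submodule.neg_mem _ hh₀)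
        have hpos0 : 0 < f ((B j : V) + h₀) := by
          rcases (hf.1 ((B j : V) + h₀)).eq_or_lt' with h | h
          · exact absurd (hf.2.2.2 _ h) hne
          · exact h
        refine main (min (c / 2) (f ((B j : V) + h₀))) (lt_min (half_pos hc) hpos0) ?_
        intro h hmem
        by_cases hsmall : f ((B j : V) + h) < c / 2
        · have hd : h - h₀ ∈ Submodule.span K (B '' (s : Set (Fin N))) :=
            Submodule.sub_mem _ hmem hh₀
          have hlt : f (h - h₀) < c := by
            have he : h - h₀ = ((B j : V) + h) + (-((B j : V) + h₀)) := by abel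
            calc f (h - h₀) = f (((B j : V) + h) + (-((B j : V) + h₀))) := by rw [he]
              _ ≤ f ((B j : V) + h) + f (-((B j : V) + h₀)) := hf.2.2.1 _ _
              _ = f ((B j : V) + h) + f ((B j : V) + h₀) := by rw [hf.neg]
              _ < c / 2 + c / 2 := add_lt_add hsmall hs₀
              _ = c := add_halves c
          have heq : h = h₀ := by
            by_contra hne'
            exact absurd (hcs _ hd (sub_ne_zero.2 hne')) (not_le.2 hlt)
          rw [heq]
          exact min_le_right _ _
        · exact le_trans (min_le_left _ _) (not_lt.1 hsmall)
      · push_neg at hex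
        exact main (c / 2) (half_pos hc) hex

end Aux

/-- Auerbach-type lemma: for any basis `(e i)` and scalars `α i`,
`max_i ‖α i • e i‖ ≤ (‖ω‖_op ‖e₁‖⋯‖e_N‖ / |ω(e)|) ‖∑ α i • e i‖`. -/
theorem max_coord_le_of_determinant
    {K V : Type*} [NormedField K] [CompleteSpace K]
    [AddCommGroup V] [Module K V] [FiniteDimensional K V] {N : ℕ}
    (f : V → ℝ) (hf : IsVNorm K f)
    (ω : V [⋀^Fin N]→ₗ[K] K) (hω : ω ≠ 0)
    (B : Module.Basis (Fin N) K V) (α : Fin N → K) :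
    (⨆ i : Fin N, f (α i • B i)) ≤
      (altOpNorm f ω * ∏ i, f (B i)) / ‖ω (fun i => B i)‖ * f (∑ i, α i • B i) := by
  classical
  -- Step A: the coordinate functionals are bounded with respect to `f`.
  have hcoord : ∀ j : Fin N, ∃ C : ℝ, 0 ≤ C ∧ ∀ v : V, ‖B.coord j v‖ ≤ C * f v := by
    by_cases htriv : ∃ x : K, 1 < ‖x‖
    · intro j
      letI : NontriviallyNormedField K := { ‹NormedField K› with non_trivial := htriv }
      letI : NormedAddCommGroup V := AddGroupNorm.toNormedAddCommGroup
        { toFun := f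
          map_zero' := hf.zero
          add_le' := hf.2.2.1
          neg' := hf.neg
          eq_zero_of_map_eq_zero' := hf.2.2.2 }
      letI : NormedSpace K V := ⟨fun a v => le_of_eq (hf.2.1 a v)⟩
      have hcont : Continuous (B.coord j) := (B.coord j).continuous_of_finiteDimensional
      let g : V →L[K] K := ⟨B.coord j, hcont⟩
      exact ⟨‖g‖, norm_nonneg g, fun v => g.le_opNorm v⟩
    · push_neg at htriv
      have hone : ∀ x : K, x ≠ 0 → ‖x‖ = 1 := by
        intro x hx
        have h1 : ‖x‖ ≤ 1 := htriv x
        have h2 : ‖x⁻¹‖ ≤ 1 := htriv x⁻¹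
        have h3 : ‖x‖ * ‖x⁻¹‖ = 1 := by rw [← norm_mul, mul_inv_cancel₀ hx, norm_one]
        nlinarith [norm_nonneg x, norm_nonneg x⁻¹]
      obtain ⟨c, hc, hcs⟩ := span_bound f hf hone B Finset.univ
      have hall : ∀ w : V, w ≠ 0 → c ≤ f w := by
        intro w hw
        refine hcs w ?_ hw
        have : (B '' (↑(Finset.univ : Finset (Fin N)) : Set (Fin N))) = Set.range B := by
          simp
        rw [this, B.span_eq]
        exact Submodule.mem_top
      intro j
      refine ⟨1 / c, by positivity, fun v => ?_⟩
      by_cases hv : v = 0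
      · simp [hv, hf.zero]
      · have h1 : ‖B.coord j v‖ ≤ 1 := by
          by_cases h : B.coord j v = 0
          · simp [h]
          · rw [hone _ h]
        refine le_trans h1 ?_
        rw [one_div, inv_mul_eq_div]
        exact (one_le_div hc).2 (hall v hv)
  choose C hC0 hC using hcoord
  -- Step B: a global bound for `ω`.
  set Ct : ℝ := ∑ r : Fin N → Fin N, ‖ω (fun i => B (r i))‖ * ∏ i, C (r i) with hCt
  have hCtnn : 0 ≤ Ct :=
    Finset.sum_nonneg fun r _ =>
      mul_nonneg (norm_nonneg _) (Finset.prod_nonneg fun i _ => hC0 _)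
  have hbound : ∀ v : Fin N → V, ‖ω v‖ ≤ Ct * ∏ i, f (v i) := by
    intro v
    have hv : ω v = ∑ r : Fin N → Fin N,
        (∏ i, B.repr (v i) (r i)) • ω (fun i => B (r i)) := by
      have h1 : v = fun i => ∑ j, B.repr (v i) j • B j :=
        funext fun i => (B.sum_repr (v i)).symm
      have h2 : ω.toMultilinearMap (fun i => ∑ j, B.repr (v i) j • B j)
          = ∑ r : Fin N → Fin N,
            (∏ i, B.repr (v i) (r i)) • ω.toMultilinearMap (fun i => B (r i)) := by
        rw [MultilinearMap.map_sum]
        exact Finset.sum_congr rfl fun r _ => ω.toMultilinearMap.map_smul_univ _ _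
      conv_lhs => rw [h1]
      exact h2
    rw [hv]
    calc ‖∑ r : Fin N → Fin N, (∏ i, B.repr (v i) (r i)) • ω (fun i => B (r i))‖
        ≤ ∑ r : Fin N → Fin N, ‖(∏ i, B.repr (v i) (r i)) • ω (fun i => B (r i))‖ :=
          norm_sum_le _ _
      _ ≤ ∑ r : Fin N → Fin N, (‖ω (fun i => B (r i))‖ * ∏ i, C (r i)) * ∏ i, f (v i) := by
          refine Finset.sum_le_sum fun r _ => ?_
          rw [smul_eq_mul, norm_mul, norm_prod]
          calc (∏ i, ‖B.repr (v i) (r i)‖) * ‖ω (fun i => B (r i))‖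
              ≤ (∏ i, C (r i) * f (v i)) * ‖ω (fun i => B (r i))‖ := by
                refine mul_le_mul_of_nonneg_right ?_ (norm_nonneg _)
                refine Finset.prod_le_prod (fun i _ => norm_nonneg _) fun i _ => ?_
                have := hC (r i) (v i)
                rwa [Module.Basis.coord_apply] at this
            _ = (‖ω (fun i => B (r i))‖ * ∏ i, C (r i)) * ∏ i, f (v i) := by
                rw [Finset.prod_mul_distrib]; ring
      _ = Ct * ∏ i, f (v i) := by rw [← Finset.sum_mul]
  -- Step C: the sup defining `altOpNorm` is well behaved.
  have hterm : ∀ v : Fin N → V, ‖ω v‖ / ∏ i, f (v i) ≤ Ct := by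
    intro v
    rcases (Finset.prod_nonneg fun i _ => hf.1 (v i)).eq_or_lt' with h | h
    · rw [h, div_zero]; exact hCtnn
    · rw [div_le_iff₀ h]; exact hbound v
  have hbdd : BddAbove (Set.range fun v : Fin N → V => ‖ω v‖ / ∏ i, f (v i)) :=
    ⟨Ct, by rintro x ⟨v, rfl⟩; exact hterm v⟩
  have hSnn : 0 ≤ altOpNorm f ω :=
    Real.iSup_nonneg fun v =>
      div_nonneg (norm_nonneg _) (Finset.prod_nonneg fun i _ => hf.1 _)
  -- Step D: `ω` does not vanish on the basis.
  have hDne : ω (fun i => B i) ≠ 0 := by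
    intro h
    apply hω
    have h2 := ω.eq_smul_basis_det B
    rw [h2, show (ω ⇑B : K) = ω (fun i => B i) from rfl, h, zero_smul]
  have hD : 0 < ‖ω (fun i => B i)‖ := norm_pos_iff.2 hDne
  have hPpos : ∀ i : Fin N, 0 < f (B i) := by
    intro i
    rcases (hf.1 (B i)).eq_or_lt' with h | h
    · exact absurd (hf.2.2.2 _ h) (B.ne_zero i)
    · exact h
  -- Step E: main estimate, coordinate by coordinate.
  have hRHSnn : 0 ≤ (altOpNorm f ω * ∏ i, f (B i)) / ‖ω (fun i => B i)‖
      * f (∑ i, α i • B i) :=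
    mul_nonneg
      (div_nonneg (mul_nonneg hSnn (Finset.prod_nonneg fun i _ => hf.1 _)) (norm_nonneg _))
      (hf.1 _)
  refine Real.iSup_le (fun i => ?_) hRHSnn
  set w : V := ∑ k, α k • B k with hwdef
  set u : Fin N → V := Function.update (fun k => (B k : V)) i w with hu
  have hωu : ω u = α i • ω (fun k => B k) := by
    have hupd : Function.update (fun k => (B k : V)) i (B i) = fun k => (B k : V) := by
      funext k
      rcases eq_or_ne k i with rfl | hk
      · rw [Function.update_self]
      · rw [Function.update_of_ne hk]
    rw [hu, hwdef, AlternatingMap.map_update_sum, Finset.sum_eq_single i]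
    · rw [AlternatingMap.map_update_smul, hupd]
    · intro k _ hk
      have heq : Function.update (fun k => (B k : V)) i (B k) k
          = Function.update (fun k => (B k : V)) i (B k) i := by
        rw [Function.update_of_ne hk, Function.update_self]
      rw [AlternatingMap.map_update_smul, ω.map_eq_zero_of_eq _ heq hk, smul_zero]
    · intro h; exact absurd (Finset.mem_univ i) h
  have hnormu : ‖ω u‖ = ‖α i‖ * ‖ω (fun k => B k)‖ := by
    rw [hωu, smul_eq_mul, norm_mul]
  set Q : ℝ := ∏ k ∈ Finset.univ.erase i, f (B k) with hQdef
  have hQpos : 0 < Q := Finset.prod_pos fun k _ => hPpos k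
  have hQ : ∏ k, f (u k) = f w * Q := by
    rw [← Finset.mul_prod_erase Finset.univ (fun k => f (u k)) (Finset.mem_univ i)]
    congr 1
    · rw [hu, Function.update_self]
    · refine Finset.prod_congr rfl fun k hk => ?_
      rw [hu, Function.update_of_ne (Finset.ne_of_mem_erase hk)]
  have hPQ : (∏ k, f (B k)) = f (B i) * Q :=
    (Finset.mul_prod_erase Finset.univ (fun k => f (B k)) (Finset.mem_univ i)).symm
  have hkey : ‖α i‖ * ‖ω (fun k => B k)‖ ≤ altOpNorm f ω * (f w * Q) := by
    rcases (hf.1 w).eq_or_lt' with hw0 | hwpos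
    · have hwz : w = 0 := hf.2.2.2 _ hw0
      have huz : ω u = 0 := by
        have : u i = 0 := by rw [hu, Function.update_self, hwz]
        exact ω.map_coord_zero i this
      rw [← hnormu, huz, norm_zero]
      exact mul_nonneg hSnn (mul_nonneg (hf.1 _) hQpos.le)
    · have h1 : ‖ω u‖ / ∏ k, f (u k) ≤ altOpNorm f ω := le_ciSup hbdd u
      have hppos : 0 < ∏ k, f (u k) := by rw [hQ]; positivity
      rw [div_le_iff₀ hppos] at h1
      calc ‖α i‖ * ‖ω (fun k => B k)‖ = ‖ω u‖ := hnormu.symm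
        _ ≤ altOpNorm f ω * ∏ k, f (u k) := h1
        _ = altOpNorm f ω * (f w * Q) := by rw [hQ]
  have hgoal : f (α i • B i) = ‖α i‖ * f (B i) := hf.2.1 _ _
  rw [hgoal, div_mul_eq_mul_div, le_div_iff₀ hD]
  calc ‖α i‖ * f (B i) * ‖ω (fun k => B k)‖
      = (‖α i‖ * ‖ω (fun k => B k)‖) * f (B i) := by ring
    _ ≤ (altOpNorm f ω * (f w * Q)) * f (B i) :=
        mul_le_mul_of_nonneg_right hkey (hf.1 _)
    _ = altOpNorm f ω * (∏ k, f (B k)) * f w := by rw [hPQ]; ring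
end

section
/- If ‖·‖ is a diagonalizable norm on V with orthogonal basis (e_i), then the dual norm ‖·‖∨ on V∨ is diagonalizable, the dual basis (e_i∨) is orthogonal for ‖·‖∨, and ‖e_i∨‖∨ = ‖e_i‖⁻¹. -/
/-- The dual norm on the dual space. -/
noncomputable def dualNorm (K : Type*) {M : Type*} [NormedField K] [AddCommGroup M]
    [Module K M] (f : M → ℝ) (μ : Module.Dual K M) : ℝ :=
  ⨆ v : {v : M // v ≠ 0}, ‖μ (v : M)‖ / f (v : M)

theorem na_sum_le {K ι : Type*} [NormedField K] (hna : IsNonarchimedean (fun x : K => ‖x‖))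
    (s : Finset ι) (g : ι → K) (C : ℝ) (hC : 0 ≤ C) (h : ∀ j ∈ s, ‖g j‖ ≤ C) :
    ‖∑ j ∈ s, g j‖ ≤ C := by
  classical
  induction s using Finset.induction_on with
  | empty => simpa using hC
  | @insert a s ha ih =>
    rw [Finset.sum_insert ha]
    refine le_trans (hna _ _) (max_le (h a (by simp)) (ih fun j hj => h j (by simp [hj])))

/-- If `f` is diagonalizable with orthogonal basis `(e i)`, then the dual norm is
diagonalizable with orthogonal basis the dual basis, and `‖e_i∨‖∨ = ‖e_i‖⁻¹`. -/
theorem dualNorm_diagonalizable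
    {K V : Type*} [NormedField K] [CompleteSpace K]
    [AddCommGroup V] [Module K V] [FiniteDimensional K V] {N : ℕ}
    (hna : IsNonarchimedean (fun x : K => ‖x‖))
    (f : V → ℝ) (hf : IsVNorm K f)
    (B : Module.Basis (Fin N) K V)
    (horth : ∀ α : Fin N → K, f (∑ i, α i • B i) = ⨆ i, ‖α i‖ * f (B i)) :
    (∀ α : Fin N → K,
        dualNorm K f (∑ i, α i • B.dualBasis i) =
          ⨆ i, ‖α i‖ * dualNorm K f (B.dualBasis i)) ∧
      ∀ i : Fin N, dualNorm K f (B.dualBasis i) = (f (B i))⁻¹ := by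
  classical
  obtain ⟨hnn, hsmul, hadd, hzero⟩ := hf
  have fpos : ∀ v : V, v ≠ 0 → 0 < f v := fun v hv =>
    lt_of_le_of_ne (hnn v) (fun h => hv (hzero v h.symm))
  have fBpos : ∀ i, 0 < f (B i) := fun i => fpos _ (B.ne_zero i)
  -- evaluation of μ := ∑ α i • dualBasis i
  have heval : ∀ (α : Fin N → K) (v : V),
      (∑ i, α i • B.dualBasis i) v = ∑ i, α i * B.repr v i := by
    intro α v
    simp [Module.Basis.dualBasis_repr]
  -- the key computation
  have key : ∀ α : Fin N → K,
      dualNorm K f (∑ i, α i • B.dualBasis i) = ⨆ i, ‖α i‖ * (f (B i))⁻¹ := by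
    intro α
    set C : ℝ := ⨆ i, ‖α i‖ * (f (B i))⁻¹ with hC
    have hC0 : 0 ≤ C :=
      Real.iSup_nonneg fun i => mul_nonneg (norm_nonneg _) (inv_nonneg.2 (fBpos i).le)
    have hCbdd : BddAbove (Set.range fun i => ‖α i‖ * (f (B i))⁻¹) :=
      Set.Finite.bddAbove (Set.finite_range _)
    -- pointwise upper bound
    have hub : ∀ v : {v : V // v ≠ 0},
        ‖(∑ i, α i • B.dualBasis i) (v : V)‖ / f (v : V) ≤ C := by
      rintro ⟨v, hv⟩
      have hfv : 0 < f v := fpos v hv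
      rw [div_le_iff₀ hfv]
      rw [heval]
      refine na_sum_le hna _ _ _ (mul_nonneg hC0 hfv.le) ?_
      intro j _
      have h1 : ‖α j‖ * (f (B j))⁻¹ ≤ C := le_ciSup hCbdd j
      have hfv2 : f v = ⨆ i, ‖B.repr v i‖ * f (B i) := by
        conv_lhs => rw [← B.sum_repr v]
        exact horth _
      have h2 : ‖B.repr v j‖ * f (B j) ≤ f v := by
        rw [hfv2]
        exact le_ciSup (f := fun i => ‖B.repr v i‖ * f (B i))
          (Set.Finite.bddAbove (Set.finite_range _)) j
      have heq : ‖α j * B.repr v j‖ = (‖α j‖ * (f (B j))⁻¹) * (‖B.repr v j‖ * f (B j)) := by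
        rw [norm_mul, mul_mul_mul_comm, inv_mul_cancel₀ (fBpos j).ne', mul_one]
      rw [heq]
      exact mul_le_mul h1 h2 (mul_nonneg (norm_nonneg _) (fBpos j).le) hC0
    have hdbdd : BddAbove (Set.range fun v : {v : V // v ≠ 0} =>
        ‖(∑ i, α i • B.dualBasis i) (v : V)‖ / f (v : V)) := by
      exact ⟨C, by rintro x ⟨v, rfl⟩; exact hub v⟩
    refine le_antisymm (Real.iSup_le hub hC0) ?_
    refine Real.iSup_le (fun j => ?_) (Real.iSup_nonneg fun v =>
      div_nonneg (norm_nonneg _) (hnn _))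
    have hBj : ‖(∑ i, α i • B.dualBasis i) (B j)‖ / f (B j) = ‖α j‖ * (f (B j))⁻¹ := by
      rw [heval]
      have : ∑ i, α i * B.repr (B j) i = α j := by
        rw [Finset.sum_eq_single j]
        · simp
        · intro i _ hi; simp [Finsupp.single_apply, Ne.symm hi]
        · simp
      rw [this, div_eq_mul_inv]
    rw [← hBj]
    exact le_ciSup hdbdd ⟨B j, B.ne_zero j⟩
  have single : ∀ i : Fin N, dualNorm K f (B.dualBasis i) = (f (B i))⁻¹ := by
    intro i
    set δ : Fin N → K := fun j => if j = i then 1 else 0 with hδ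
    have h1 : (∑ j, δ j • B.dualBasis j) = B.dualBasis i := by
      rw [Finset.sum_eq_single i]
      · simp [hδ]
      · intro j _ hj; simp [hδ, hj]
      · simp
    have hk := key δ
    rw [h1] at hk
    rw [hk]
    refine le_antisymm (Real.iSup_le (fun j => ?_) (inv_nonneg.2 (fBpos i).le)) ?_
    · rcases eq_or_ne j i with rfl | hj
      · simp [hδ]
      · simp [hδ, hj, inv_nonneg.2 (fBpos i).le]
    · have h2 : ‖δ i‖ * (f (B i))⁻¹ = (f (B i))⁻¹ := by simp [hδ]
      rw [← h2]
      exact le_ciSup (f := fun j => ‖δ j‖ * (f (B j))⁻¹)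
        (Set.Finite.bddAbove (Set.finite_range _)) i
  refine ⟨fun α => ?_, single⟩
  rw [key α]
  exact iSup_congr fun i => by rw [single i]
end
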